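/- Let G be a finite simple graph on an even number of vertices that admits a join. Then V(G) can be partitioned into three (possibly empty) odd sets; in particular the odd chromatic number of G is at most 3. -/

import Mathlib

/-- A set `S` of vertices of `G` is *odd* if every vertex of `S` has an odd number of
neighbors inside `S`. -/
def SimpleGraph.IsOddSet {V : Type*} (G : SimpleGraph V) (S : Set V) : Prop :=
  ∀ v ∈ S, Odd (S ∩ G.neighborSet v).ncard

/-!
Gallai: the vertices of a finite graph split into a set `Y` inducing odd degrees and a set `Yᶜ`
inducing even degrees. Over `ZMod 2`, with `A` the adjacency matrix and `d = A *ᵥ 1`, the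
indicator `x` of `Y` only has to solve `(A + diagonal (1 + d)) *ᵥ x = d`; this is solvable
because the diagonal of a symmetric matrix over `ZMod 2` lies in its range (`z ⬝ᵥ M *ᵥ z` is
`diag M ⬝ᵥ z`, so the diagonal is orthogonal to the kernel).

For a join `(V₁, V₂)` and odd-size sets `T₁ ⊆ V₁`, `T₂ ⊆ V₂`, split each `Tᵢ = Xᵢ ∪ Yᵢ` in this
way. Odd sets have even size by the handshake lemma, so `|Xᵢ|` is odd, and since every vertex of
`T₁` sees all of `T₂`, both `X₁ ∪ X₂` and `Y₁ ∪ Y₂` are odd sets. If `|V₁|` and `|V₂|` are odd take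
`Tᵢ = Vᵢ`; if both are even remove one vertex from each side: the two removed vertices form an
edge, which is a third odd set.
-/

open Matrix

namespace Matrix

variable {ι : Type*} [Fintype ι] [DecidableEq ι]

theorem IsSymm.exists_mulVec_eq_of_forall_ker {K : Type*} [Field K] {M : Matrix ι ι K}
    (hM : M.IsSymm) {d : ι → K} (hd : ∀ z, M *ᵥ z = 0 → d ⬝ᵥ z = 0) :
    ∃ x, M *ᵥ x = d := by
  suffices d ∈ LinearMap.range M.mulVecLin from this
  rw [← Subspace.forall_mem_dualAnnihilator_apply_eq_zero_iff]
  intro φ hφ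
  set z : ι → K := fun i => φ (Pi.single i 1)
  have hφz : ∀ w, φ w = z ⬝ᵥ w := fun w => by
    rw [LinearMap.pi_apply_eq_sum_univ φ w, dotProduct]
    refine Finset.sum_congr rfl fun i _ => ?_
    rw [smul_eq_mul, mul_comm]
    congr 2
    ext j
    simp [Pi.single_apply, eq_comm]
  have hz : M *ᵥ z = 0 := by
    rw [← hM.eq, mulVec_transpose, ← dotProduct_eq_zero_iff]
    intro w
    rw [← dotProduct_mulVec, ← hφz]
    exact (Submodule.mem_dualAnnihilator φ).1 hφ _ ⟨w, rfl⟩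
  rw [hφz, dotProduct_comm]
  exact hd z hz

theorem dotProduct_mulVec_self_eq_diag_dotProduct {M : Matrix ι ι (ZMod 2)} (hM : M.IsSymm)
    (z : ι → ZMod 2) : z ⬝ᵥ (M *ᵥ z) = M.diag ⬝ᵥ z := by
  have hsq : ∀ a : ZMod 2, a * a = a := by decide
  set f : ι × ι → ZMod 2 := fun p => z p.1 * M p.1 p.2 * z p.2
  -- the off-diagonal terms cancel in pairs
  have hoff : ∑ p ∈ Finset.univ.offDiag, f p = 0 := by
    refine Finset.sum_involution (fun p _ => p.swap) (fun p _ => ?_) (fun p hp _ h => ?_)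
      (fun p hp => by simpa [eq_comm] using hp) (fun p _ => rfl)
    · have hswap : f p.swap = f p := by
        simp only [f, Prod.fst_swap, Prod.snd_swap, hM.apply p.1 p.2]; ring
      rw [hswap, CharTwo.add_self_eq_zero]
    · exact (Finset.mem_offDiag.1 hp).2.2 (Prod.ext_iff.1 h).1.symm
  have hdiag : ∑ p ∈ Finset.univ.diag, f p = M.diag ⬝ᵥ z := by
    rw [Finset.sum_diag, dotProduct]
    refine Finset.sum_congr rfl fun i _ => ?_
    simp only [f, diag_apply]
    rw [mul_comm (z i), mul_assoc, hsq]
  calc z ⬝ᵥ (M *ᵥ z) = ∑ p ∈ Finset.univ ×ˢ Finset.univ, f p := by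
        simp only [dotProduct, mulVec, Finset.sum_product, Finset.mul_sum, f, mul_assoc]
    _ = M.diag ⬝ᵥ z := by
        rw [← Finset.diag_union_offDiag, Finset.sum_union (Finset.disjoint_diag_offDiag _), hoff,
          add_zero, hdiag]

theorem IsSymm.exists_mulVec_eq_diag {M : Matrix ι ι (ZMod 2)} (hM : M.IsSymm) :
    ∃ x, M *ᵥ x = M.diag :=
  hM.exists_mulVec_eq_of_forall_ker fun z hz => by
    rw [← dotProduct_mulVec_self_eq_diag_dotProduct hM, hz, dotProduct_zero]

end Matrix

namespace SimpleGraph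

variable {V : Type*} (G : SimpleGraph V)

def IsEvenSet (S : Set V) : Prop :=
  ∀ v ∈ S, Even (S ∩ G.neighborSet v).ncard

theorem natCast_ncard_inter_neighborSet [Fintype V] [DecidableRel G.Adj] (x : V → ZMod 2)
    (v : V) :
    (({u | x u = 1} ∩ G.neighborSet v).ncard : ZMod 2) = (G.adjMatrix (ZMod 2) *ᵥ x) v := by
  have hx : ∀ a : ZMod 2, a = if a = 1 then 1 else 0 := by decide
  have hset : {u | x u = 1} ∩ G.neighborSet v = ↑{u ∈ G.neighborFinset v | x u = 1} := by
    ext u; simp [and_comm]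
  rw [adjMatrix_mulVec_apply, Finset.sum_congr rfl fun u _ => hx (x u), Finset.sum_boole, hset,
    Set.ncard_coe_finset]

theorem exists_isOddSet_isEvenSet_compl [Finite V] : ∃ Y, G.IsOddSet Y ∧ G.IsEvenSet Yᶜ := by
  classical
  have := Fintype.ofFinite V
  set A := G.adjMatrix (ZMod 2)
  set d := A *ᵥ 1
  set N := A + diagonal (1 + d)
  have hN : N.IsSymm := G.isSymm_adjMatrix.add (isSymm_diagonal _)
  have hNdiag : N.diag = 1 + d := by ext v; simp [N, A]
  have hN1 : N *ᵥ 1 = 1 := by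
    ext v
    simp only [N, add_mulVec, Pi.add_apply, mulVec_diagonal, Pi.one_apply, mul_one]
    grind
  obtain ⟨y, hy⟩ := hN.exists_mulVec_eq_diag
  set x := 1 + y
  have hx : ∀ v, (A *ᵥ x) v + (1 + d v) * x v = d v := fun v => by
    have : N *ᵥ x = d := by
      rw [mulVec_add, hN1, hy, hNdiag]
      ext v
      simp only [Pi.add_apply, Pi.one_apply]
      grind
    simpa [N, add_mulVec, mulVec_diagonal] using congrFun this v
  have hne : ∀ a : ZMod 2, a ≠ 1 ↔ 1 + a = 1 := by decide
  refine ⟨{v | x v = 1}, fun v (hv : x v = 1) => ?_, fun v (hv : x v ≠ 1) => ?_⟩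
  · rw [← ZMod.natCast_eq_one_iff_odd, natCast_ncard_inter_neighborSet]
    grind
  · have hcompl : {u | x u = 1}ᶜ = {u | (1 + x) u = 1} := Set.ext fun u => hne (x u)
    have hv := (hne _).1 hv
    rw [hcompl, ← ZMod.natCast_eq_zero_iff_even, natCast_ncard_inter_neighborSet, mulVec_add,
      Pi.add_apply]
    grind

theorem ncard_image_val_inter_neighborSet {T : Set V} (S : Set T) (a : T) :
    (Subtype.val '' S ∩ G.neighborSet a).ncard = (S ∩ (G.induce T).neighborSet a).ncard := by
  rw [← Set.ncard_image_of_injective _ Subtype.val_injective, Set.image_inter Subtype.val_injective]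
  congr 1
  ext u
  simp +contextual

theorem exists_isEvenSet_isOddSet_union_eq [Finite V] (T : Set V) :
    ∃ X Y, Disjoint X Y ∧ X ∪ Y = T ∧ G.IsEvenSet X ∧ G.IsOddSet Y := by
  obtain ⟨Y, hY, hYc⟩ := (G.induce T).exists_isOddSet_isEvenSet_compl
  refine ⟨Subtype.val '' Yᶜ, Subtype.val '' Y,
    (Set.disjoint_image_iff Subtype.val_injective).2 disjoint_compl_left,
    by rw [← Set.image_union, Set.compl_union_self, Set.image_univ, Subtype.range_coe], ?_, ?_⟩
  · rintro _ ⟨a, ha, rfl⟩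
    rw [ncard_image_val_inter_neighborSet]
    exact hYc a ha
  · rintro _ ⟨a, ha, rfl⟩
    rw [ncard_image_val_inter_neighborSet]
    exact hY a ha

theorem IsOddSet.even_ncard [Finite V] {G : SimpleGraph V} {S : Set V} (hS : G.IsOddSet S) :
    Even S.ncard := by
  classical
  have := Fintype.ofFinite S
  have hdeg : ∀ a : S, Odd ((G.induce S).degree a) := fun a => by
    rw [← card_neighborSet_eq_degree, ← Nat.card_eq_fintype_card, Nat.card_coe_set_eq,
      ← Set.univ_inter ((G.induce S).neighborSet a), ← ncard_image_val_inter_neighborSet,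
      Set.image_univ, Subtype.range_coe]
    exact hS a a.2
  have := (G.induce S).even_card_odd_degree_vertices
  rwa [Finset.filter_true_of_mem fun a _ => hdeg a, Finset.card_univ, ← Nat.card_eq_fintype_card,
    Nat.card_coe_set_eq] at this

theorem disjoint_of_forall_adj {P Q : Set V} (hPQ : ∀ u ∈ P, ∀ w ∈ Q, G.Adj u w) :
    Disjoint P Q :=
  Set.disjoint_left.2 fun u hP hQ => G.irrefl (hPQ u hP u hQ)

theorem ncard_union_inter_neighborSet [Finite V] {P Q : Set V} (hPQ : Disjoint P Q) {v : V}
    (hQ : Q ⊆ G.neighborSet v) :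
    ((P ∪ Q) ∩ G.neighborSet v).ncard = (P ∩ G.neighborSet v).ncard + Q.ncard := by
  rw [Set.union_inter_distrib_right, Set.inter_eq_left.2 hQ,
    Set.ncard_union_eq (hPQ.mono_left Set.inter_subset_left)]

theorem isOddSet_union_of_forall_adj [Finite V] {P Q : Set V}
    (hPQ : ∀ u ∈ P, ∀ w ∈ Q, G.Adj u w)
    (hP : ∀ v ∈ P, Odd ((P ∩ G.neighborSet v).ncard + Q.ncard))
    (hQ : ∀ v ∈ Q, Odd ((Q ∩ G.neighborSet v).ncard + P.ncard)) :
    G.IsOddSet (P ∪ Q) := by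
  rintro v (hv | hv)
  · rw [G.ncard_union_inter_neighborSet (G.disjoint_of_forall_adj hPQ) fun w hw => hPQ v hv w hw]
    exact hP v hv
  · rw [Set.union_comm, G.ncard_union_inter_neighborSet (G.disjoint_of_forall_adj hPQ).symm
      fun u hu => (hPQ u hu v hv).symm]
    exact hQ v hv

theorem isOddSet_pair {u w : V} (h : G.Adj u w) : G.IsOddSet {u, w} := by
  have hpair : ∀ {a b}, G.Adj a b → ({a, b} ∩ G.neighborSet a).ncard = 1 := fun hab => by
    rw [Set.insert_inter_of_notMem G.notMem_neighborSet_self,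
      Set.singleton_inter_of_mem ((G.mem_neighborSet _ _).2 hab), Set.ncard_singleton]
  rintro v (rfl | rfl)
  · rw [hpair h]; exact odd_one
  · rw [Set.pair_comm, hpair h.symm]; exact odd_one

theorem exists_isOddSet_isOddSet_union_eq_of_forall_adj [Finite V] {T₁ T₂ : Set V}
    (hT : ∀ u ∈ T₁, ∀ w ∈ T₂, G.Adj u w) (h₁ : Odd T₁.ncard) (h₂ : Odd T₂.ncard) :
    ∃ A B, Disjoint A B ∧ A ∪ B = T₁ ∪ T₂ ∧ G.IsOddSet A ∧ G.IsOddSet B := by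
  obtain ⟨X₁, Y₁, hXY₁, rfl, hX₁, hY₁⟩ := G.exists_isEvenSet_isOddSet_union_eq T₁
  obtain ⟨X₂, Y₂, hXY₂, rfl, hX₂, hY₂⟩ := G.exists_isEvenSet_isOddSet_union_eq T₂
  have hY₁e := hY₁.even_ncard
  have hY₂e := hY₂.even_ncard
  have hX₁o : Odd X₁.ncard := by
    rw [Set.ncard_union_eq hXY₁] at h₁; exact (Nat.odd_add.1 h₁).2 hY₁e
  have hX₂o : Odd X₂.ncard := by
    rw [Set.ncard_union_eq hXY₂] at h₂; exact (Nat.odd_add.1 h₂).2 hY₂e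
  have hT' := G.disjoint_of_forall_adj hT
  refine ⟨X₁ ∪ X₂, Y₁ ∪ Y₂, ?_, Set.union_union_union_comm _ _ _ _, ?_, ?_⟩
  · simp only [Set.disjoint_union_left, Set.disjoint_union_right] at hT' ⊢
    exact ⟨⟨hXY₁, hT'.1.2.symm⟩, hT'.2.1, hXY₂⟩
  · exact G.isOddSet_union_of_forall_adj
      (fun u hu w hw => hT u (.inl hu) w (.inl hw))
      (fun v hv => (hX₁ v hv).add_odd hX₂o) (fun v hv => (hX₂ v hv).add_odd hX₁o)
  · exact G.isOddSet_union_of_forall_adj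
      (fun u hu w hw => hT u (.inr hu) w (.inr hw))
      (fun v hv => (hY₁ v hv).add_even hY₂e) (fun v hv => (hY₂ v hv).add_even hY₁e)

theorem exists_odd_ncard_subsets_isOddSet_compl [Finite V] {V₁ V₂ : Set V}
    (h₁ : V₁.Nonempty) (h₂ : V₂.Nonempty) (hcover : V₁ ∪ V₂ = Set.univ)
    (hjoin : ∀ u ∈ V₁, ∀ w ∈ V₂, G.Adj u w) (heven : Even (V₁.ncard + V₂.ncard)) :
    ∃ T₁ ⊆ V₁, ∃ T₂ ⊆ V₂, Odd T₁.ncard ∧ Odd T₂.ncard ∧ G.IsOddSet (T₁ ∪ T₂)ᶜ := by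
  rcases Nat.even_or_odd V₁.ncard with hV₁ | hV₁
  · obtain ⟨u, hu⟩ := h₁
    obtain ⟨w, hw⟩ := h₂
    have hV₂ : Even V₂.ncard := (Nat.even_add.1 heven).1 hV₁
    refine ⟨V₁ \ {u}, Set.sdiff_subset, V₂ \ {w}, Set.sdiff_subset, ?_, ?_, ?_⟩
    · rwa [← Nat.not_even_iff_odd, ← Nat.even_add_one, Set.ncard_sdiff_singleton_add_one hu]
    · rwa [← Nat.not_even_iff_odd, ← Nat.even_add_one, Set.ncard_sdiff_singleton_add_one hw]
    · have hdisj := G.disjoint_of_forall_adj hjoin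
      convert G.isOddSet_pair (hjoin u hu w hw) using 1
      ext x
      have hx : x ∈ V₁ ∪ V₂ := hcover ▸ Set.mem_univ x
      simp only [Set.mem_compl_iff, Set.mem_union, Set.mem_sdiff, Set.mem_singleton_iff,
        Set.mem_insert_iff]
      have := Set.disjoint_left.1 hdisj
      grind
  · refine ⟨V₁, subset_rfl, V₂, subset_rfl, hV₁, ?_, ?_⟩
    · rwa [← Nat.not_even_iff_odd, ← Nat.even_add.1 heven, Nat.not_even_iff_odd]
    · rw [hcover, Set.compl_univ]
      exact fun v hv => hv.elim

end SimpleGraph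

/-- If a finite graph `G` on an even number of vertices admits a join, then its vertex set
can be partitioned into three (possibly empty) odd sets; in particular χ_odd(G) ≤ 3. -/
theorem stmt2 {V : Type*} [Fintype V] (G : SimpleGraph V)
    (heven : Even (Fintype.card V))
    (V1 V2 : Set V) (h1 : V1.Nonempty) (h2 : V2.Nonempty)
    (hdisj : Disjoint V1 V2) (hcover : V1 ∪ V2 = Set.univ)
    (hjoin : ∀ u ∈ V1, ∀ w ∈ V2, G.Adj u w) :
    ∃ A B C : Set V, Disjoint A B ∧ Disjoint A C ∧ Disjoint B C ∧
      A ∪ B ∪ C = Set.univ ∧ G.IsOddSet A ∧ G.IsOddSet B ∧ G.IsOddSet C := by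
  have hcard : V1.ncard + V2.ncard = Fintype.card V := by
    rw [← Set.ncard_union_eq hdisj, hcover, Set.ncard_univ, Nat.card_eq_fintype_card]
  obtain ⟨T1, hT1, T2, hT2, hodd1, hodd2, hC⟩ :=
    G.exists_odd_ncard_subsets_isOddSet_compl h1 h2 hcover hjoin (hcard ▸ heven)
  obtain ⟨A, B, hAB, hunion, hA, hB⟩ := G.exists_isOddSet_isOddSet_union_eq_of_forall_adj
    (fun u hu w hw => hjoin u (hT1 hu) w (hT2 hw)) hodd1 hodd2
  refine ⟨A, B, (T1 ∪ T2)ᶜ, hAB, ?_, ?_, by rw [hunion, Set.union_compl_self], hA, hB, hC⟩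
  · exact Set.disjoint_compl_right_iff_subset.2 (hunion ▸ Set.subset_union_left)
  · exact Set.disjoint_compl_right_iff_subset.2 (hunion ▸ Set.subset_union_right)
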